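/- Let R be a commutative noetherian domain over a field k and B = R_p(t,sigma,H,J) a BR algebra of rank n. Then the multiplicative set X = ({a t^alpha : a in I^{(alpha)}, alpha > 0} union {1}) minus {0}, where alpha > 0 means alpha_i >= 0 for all i and alpha != 0, is both a left and a right Ore set of B. -/

import Mathlib

open scoped Pointwise TensorProduct

namespace BR

/-- The ordered product `t₁^{α₁} ⋯ tₙ^{αₙ}` in the group of units. -/
def tpow {A : Type*} [Monoid A] {n : ℕ} (t : Fin n → Aˣ) (α : Fin n → ℤ) : Aˣ :=
  ((List.finRange n).map fun i => t i ^ α i).prod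

/-- `σ^α = σ₁^{α₁} ⋯ σₙ^{αₙ}` as an algebra automorphism. -/
def σpow {k R : Type*} [CommSemiring k] [Semiring R] [Algebra k R] {n : ℕ}
    (σ : Fin n → R ≃ₐ[k] R) (α : Fin n → ℤ) : R ≃ₐ[k] R :=
  ((List.finRange n).map fun i => σ i ^ α i).prod

/-- The ideal `I_σ^{(m)}(H, J)`:  `J σ(J) ⋯ σ^{m-1}(J)` for `m > 0`, `R` for `m = 0`,
and `σ⁻¹(H) σ⁻²(H) ⋯ σ^{m}(H)` for `m < 0`. -/
noncomputable def seg {k R : Type*} [Field k] [Ring R] [Algebra k R]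
    (σ : R ≃ₐ[k] R) (H J : Submodule k R) (m : ℤ) : Submodule k R :=
  if 0 < m then
    ((List.range m.toNat).map fun i => J.map (σ ^ (i : ℤ)).toLinearMap).prod
  else if m = 0 then ⊤
  else ((List.range (-m).toNat).map fun i => H.map (σ ^ (-((i : ℤ) + 1))).toLinearMap).prod

/-- `I^{(α)} = I₁^{(α₁)} ⋯ Iₙ^{(αₙ)}`. -/
noncomputable def segVec {k R : Type*} [Field k] [Ring R] [Algebra k R] {n : ℕ}
    (σ : Fin n → R ≃ₐ[k] R) (H J : Fin n → Submodule k R) (α : Fin n → ℤ) :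
    Submodule k R :=
  ((List.finRange n).map fun i => seg (σ i) (H i) (J i) (α i)).prod

/-- A Bell–Rogalski datum `(R, t, σ, p, H, J)`. -/
structure IsBRDatum {k R : Type*} [Field k] [Ring R] [Algebra k R] {n : ℕ}
    (σ : Fin n → R ≃ₐ[k] R) (p : Fin n → Fin n → kˣ)
    (H J : Fin n → Submodule k R) : Prop where
  comm : ∀ i j, σ i * σ j = σ j * σ i
  antisym : ∀ i j, p i j = (p j i)⁻¹
  H_mul_left : ∀ i (r x : R), x ∈ H i → r * x ∈ H i
  H_mul_right : ∀ i (r x : R), x ∈ H i → x * r ∈ H i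
  J_mul_left : ∀ i (r x : R), x ∈ J i → r * x ∈ J i
  J_mul_right : ∀ i (r x : R), x ∈ J i → x * r ∈ J i
  mapH : ∀ i j, i ≠ j → (H j).map (σ i).toLinearMap = H j
  mapJ : ∀ i j, i ≠ j → (J j).map (σ i).toLinearMap = J j
  HH : ∀ i j, i ≠ j → H i * H j = H j * H i
  HJ : ∀ i j, i ≠ j → H i * J j = J j * H i
  JJ : ∀ i j, i ≠ j → J i * J j = J j * J i
  seg_ne_bot : ∀ i (m : ℤ), seg (σ i) (H i) (J i) m ≠ ⊥

/-- A realization of the iterated skew Laurent extension `R_p[t^{±1}; σ]`: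
an algebra `A` containing `R`, with units `t i` satisfying the skew commutation
relations, which is a free left `R`-module with basis the monomials `t^α`. -/
structure SkewLaurent (k : Type*) [Field k] {R : Type*} [Ring R] [Algebra k R] {n : ℕ}
    (σ : Fin n → R ≃ₐ[k] R) (p : Fin n → Fin n → kˣ)
    (A : Type*) [Ring A] [Algebra k A] where
  ι : R →ₐ[k] A
  t : Fin n → Aˣ
  rel_r : ∀ i (r : R), (t i : A) * ι r = ι (σ i r) * (t i : A)
  rel_t : ∀ i j, i ≠ j → (t j : A) * (t i : A) =
    algebraMap k A (p i j) * ((t i : A) * (t j : A))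
  repr_exists : ∀ a : A, ∃ c : (Fin n → ℤ) →₀ R,
    a = c.sum fun α r => ι r * (tpow t α : A)
  repr_free : ∀ c : (Fin n → ℤ) →₀ R,
    (c.sum fun α r => ι r * (tpow t α : A)) = 0 → c = 0

/-- The graded component `B_α = I^{(α)} t^α` of the Bell–Rogalski algebra, as a
`k`-subspace of the ambient skew Laurent extension. -/
noncomputable def brComponent {k R : Type*} [Field k] [Ring R] [Algebra k R] {n : ℕ}
    {σ : Fin n → R ≃ₐ[k] R} {p : Fin n → Fin n → kˣ}
    {A : Type*} [Ring A] [Algebra k A]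
    (E : SkewLaurent k σ p A) (H J : Fin n → Submodule k R) (α : Fin n → ℤ) :
    Submodule k A :=
  ((segVec σ H J α).map E.ι.toLinearMap).map (LinearMap.mulRight k ((tpow E.t α : Aˣ) : A))

/-- The Bell–Rogalski algebra `B = ⊕_α I^{(α)} t^α` as a `k`-subspace of the
ambient skew Laurent extension. -/
noncomputable def brSubmodule {k R : Type*} [Field k] [Ring R] [Algebra k R] {n : ℕ}
    {σ : Fin n → R ≃ₐ[k] R} {p : Fin n → Fin n → kˣ}
    {A : Type*} [Ring A] [Algebra k A]
    (E : SkewLaurent k σ p A) (H J : Fin n → Submodule k R) : Submodule k A :=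
  ⨆ α : Fin n → ℤ, brComponent E H J α

/-- The weight space `M_𝔪 = {v ∈ M ∣ 𝔪 ⬝ v = 0}` of a module over an algebra `B`
receiving a map from `R`. -/
def weightSpace {k R B : Type*} [Field k] [CommRing R] [Algebra k R]
    [Ring B] [Algebra k B] (ιB : R →ₐ[k] B)
    (M : Type*) [AddCommGroup M] [Module B M] (m : Ideal R) : AddSubgroup M where
  carrier := {v | ∀ r ∈ m, ιB r • v = 0}
  zero_mem' := by intro r hr; simp
  add_mem' := by intro a b ha hb r hr; rw [smul_add, ha r hr, hb r hr, add_zero]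
  neg_mem' := by intro a ha r hr; rw [smul_neg, ha r hr, neg_zero]

/-- `M` is a weight module: the direct sum of its weight spaces over maximal ideals. -/
def IsWeightModule {k R B : Type*} [Field k] [CommRing R] [Algebra k R]
    [Ring B] [Algebra k B] (ιB : R →ₐ[k] B)
    (M : Type*) [AddCommGroup M] [Module B M] : Prop :=
  (⨆ m : MaximalSpectrum R, weightSpace ιB M m.asIdeal) = ⊤ ∧
    iSupIndep fun m : MaximalSpectrum R => weightSpace ιB M m.asIdeal

/-- A bundled simple weight module over `B`. -/
structure SimpleWeightWitness.{w, uk, uR, uB} (k : Type uk) [Field k] {R : Type uR}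
    [CommRing R] [Algebra k R]
    (B : Type uB) [Ring B] [Algebra k B] (ιB : R →ₐ[k] B) where
  M : Type w
  [acg : AddCommGroup M]
  [mod : Module B M]
  simple : IsSimpleModule B M
  weight : IsWeightModule ιB M

attribute [instance] SimpleWeightWitness.acg SimpleWeightWitness.mod

/-- The support of a bundled weight module. -/
def SimpleWeightWitness.supp {k : Type*} [Field k] {R : Type*} [CommRing R] [Algebra k R]
    {B : Type*} [Ring B] [Algebra k B] {ιB : R →ₐ[k] B}
    (W : SimpleWeightWitness k B ιB) : Set (MaximalSpectrum R) :=
  {m' | weightSpace ιB W.M m'.asIdeal ≠ ⊥}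

/-- Isomorphism of bundled weight modules, as `B`-modules. -/
def SimpleWeightWitness.Iso {k : Type*} [Field k] {R : Type*} [CommRing R] [Algebra k R]
    {B : Type*} [Ring B] [Algebra k B] {ιB : R →ₐ[k] B}
    (W : SimpleWeightWitness k B ιB) (W' : SimpleWeightWitness k B ιB) : Prop :=
  Nonempty (W.M ≃ₗ[B] W'.M)

/-- Gelfand–Kirillov dimension of a `k`-algebra. -/
noncomputable def GKdim (k A : Type*) [Field k] [Ring A] [Algebra k A] : ENNReal :=
  ⨆ S : Finset A, Filter.limsup
    (fun n : ℕ => ENNReal.ofReal (Real.logb n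
      (Module.finrank k ↥((Submodule.span k (insert (1 : A) (S : Set A))) ^ n))))
    Filter.atTop

/-- An automorphism is locally algebraic if every orbit is contained in a
finite-dimensional subspace. -/
def LocallyAlgebraic {k R : Type*} [Field k] [Ring R] [Algebra k R]
    (σ : R ≃ₐ[k] R) : Prop :=
  ∀ r : R, ∃ V : Submodule k R, FiniteDimensional k ↥V ∧ ∀ m : ℕ, (σ ^ m) r ∈ V

/-- The defining relations of a twisted generalized Weyl algebra of type `(A₁)ⁿ`. -/
def TGWARels (k : Type*) [Field k] {R : Type*} [Ring R] [Algebra k R] {n : ℕ}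
    (σ : Fin n → R ≃ₐ[k] R) (a : Fin n → R) (γ μ : Fin n → Fin n → kˣ)
    {T : Type*} [Ring T] [Algebra k T]
    (ι : R →ₐ[k] T) (Xp Xm : Fin n → T) : Prop :=
  (∀ i (r : R), Xp i * ι r = ι (σ i r) * Xp i) ∧
  (∀ i (r : R), Xm i * ι r = ι ((σ i)⁻¹ r) * Xm i) ∧
  (∀ i, Xm i * Xp i = ι (a i)) ∧
  (∀ i, Xp i * Xm i = ι (σ i (a i))) ∧
  (∀ i j, i ≠ j → Xp i * Xm j = ((μ i j : kˣ) : k) • (Xm j * Xp i)) ∧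
  (∀ i j, i ≠ j → Xp i * Xp j = ((γ i j * (μ i j)⁻¹ : kˣ) : k) • (Xp j * Xp i)) ∧
  (∀ i j, i ≠ j → Xm j * Xm i = ((γ i j * (μ j i)⁻¹ : kˣ) : k) • (Xm i * Xm j))

/-- A realization of the twisted generalized Weyl algebra `A_μ(R, σ, a)` of type
`(A₁)ⁿ`: it satisfies the defining relations, is `ℤⁿ`-graded with `deg Xᵢ± = ±eᵢ`,
and is universal with respect to the relations. -/
structure TGWA (k : Type*) [Field k] {R : Type*} [Ring R] [Algebra k R] {n : ℕ}
    (σ : Fin n → R ≃ₐ[k] R) (a : Fin n → R) (γ μ : Fin n → Fin n → kˣ)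
    (T : Type*) [Ring T] [Algebra k T] where
  ι : R →ₐ[k] T
  Xp : Fin n → T
  Xm : Fin n → T
  rels : TGWARels k σ a γ μ ι Xp Xm
  grading : (Fin n → ℤ) → Submodule k T
  grading_internal : DirectSum.IsInternal grading
  grading_mul : ∀ (α β : Fin n → ℤ) (x y : T),
    x ∈ grading α → y ∈ grading β → x * y ∈ grading (α + β)
  ι_mem : ∀ r, ι r ∈ grading 0
  Xp_mem : ∀ i, Xp i ∈ grading (Pi.single i 1)
  Xm_mem : ∀ i, Xm i ∈ grading (-Pi.single i 1)
  free : ∀ {C : Type} [Ring C] [Algebra k C] (ιC : R →ₐ[k] C) (Yp Ym : Fin n → C),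
    TGWARels k σ a γ μ ιC Yp Ym →
    ∃! f : T →ₐ[k] C, f.comp ι = ιC ∧ (∀ i, f (Xp i) = Yp i) ∧ (∀ i, f (Xm i) = Ym i)


/-- The multiplicative set `X = ({a t^α ∣ a ∈ I^{(α)}, α > 0} ∪ {1}) \ {0}` of the
BR algebra `B`, where `α > 0` means `αᵢ ≥ 0` for all `i` and `α ≠ 0`. -/
def oreSet {k R : Type*} [Field k] [Ring R] [Algebra k R] {n : ℕ}
    {σ : Fin n → R ≃ₐ[k] R} {p : Fin n → Fin n → kˣ}
    {A : Type*} [Ring A] [Algebra k A]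
    (E : SkewLaurent k σ p A) (H J : Fin n → Submodule k R)
    (B : Subalgebra k A) : Set ↥B :=
  {x : ↥B | x ≠ 0 ∧ (x = 1 ∨ ∃ α : Fin n → ℤ, (∀ i, 0 ≤ α i) ∧ α ≠ 0 ∧
    ∃ a ∈ segVec σ H J α, (x : A) = E.ι a * (tpow E.t α : A))}

set_option linter.unusedSectionVars false


section QC
variable {G : Type*} [Group G] {Γ : Type*} [CommGroup Γ] (c : Γ →* G)

/-- Quasi-commutation up to a central scalar. -/
def qc (x y : G) : Prop := ∃ γ : Γ, y * x = c γ * (x * y)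

variable {c}
variable (hc : ∀ (γ : Γ) (g : G), c γ * g = g * c γ)
include hc

omit hc in
lemma hcomm_of (hc : ∀ (γ : Γ) (g : G), c γ * g = g * c γ) :
    ∀ (γ : Γ) (a b : G), a * (c γ * b) = c γ * (a * b) := fun γ a b => by
  rw [← mul_assoc, ← hc, mul_assoc]

lemma qc_one_right {x : G} : qc c x 1 := ⟨1, by simp⟩

lemma qc_one_left {y : G} : qc c 1 y := ⟨1, by simp⟩

lemma qc_mul_right {x y y' : G} (h1 : qc c x y) (h2 : qc c x y') : qc c x (y * y') := by
  obtain ⟨γ, h⟩ := h1; obtain ⟨γ', h'⟩ := h2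
  refine ⟨γ' * γ, ?_⟩
  calc y * y' * x = y * (c γ' * (x * y')) := by rw [mul_assoc, h']
    _ = c γ' * (y * x) * y' := by rw [hcomm_of hc]; group
    _ = c γ' * (c γ * (x * y)) * y' := by rw [h]
    _ = c (γ' * γ) * (x * (y * y')) := by rw [map_mul]; group

lemma qc_mul_left {x x' y : G} (h1 : qc c x y) (h2 : qc c x' y) : qc c (x * x') y := by
  obtain ⟨γ, h⟩ := h1; obtain ⟨γ', h'⟩ := h2
  refine ⟨γ * γ', ?_⟩
  calc y * (x * x') = c γ * (x * y) * x' := by rw [← mul_assoc, h]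
    _ = c γ * (x * (c γ' * (x' * y))) := by rw [mul_assoc, mul_assoc, h']
    _ = c γ * (c γ' * (x * (x' * y))) := by rw [hcomm_of hc γ' x]
    _ = c (γ * γ') * (x * x' * y) := by rw [map_mul]; group

lemma qc_inv_left {x y : G} (h : qc c x y) : qc c x⁻¹ y := by
  obtain ⟨γ, h⟩ := h
  refine ⟨γ⁻¹, ?_⟩
  rw [map_inv]
  calc y * x⁻¹ = (c γ)⁻¹ * (x⁻¹ * (y * x) * x⁻¹) := by rw [h, hcomm_of hc]; group
    _ = (c γ)⁻¹ * (x⁻¹ * y) := by group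

lemma qc_inv_right {x y : G} (h : qc c x y) : qc c x y⁻¹ := by
  obtain ⟨γ, h⟩ := h
  refine ⟨γ⁻¹, ?_⟩
  rw [map_inv]
  have h2 : x * y⁻¹ = c γ * (y⁻¹ * x) := by
    calc x * y⁻¹ = y⁻¹ * (y * x) * y⁻¹ := by group
      _ = c γ * (y⁻¹ * x) := by rw [h, hcomm_of hc]; group
  rw [h2]; group

lemma qc_pow_left {x y : G} (h : qc c x y) (m : ℕ) : qc c (x ^ m) y := by
  induction m with
  | zero => simpa using qc_one_left hc
  | succ m ih => rw [pow_succ]; exact qc_mul_left hc ih h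

lemma qc_zpow_left {x y : G} (h : qc c x y) (m : ℤ) : qc c (x ^ m) y := by
  cases m with
  | ofNat m => simpa using qc_pow_left hc h m
  | negSucc m => rw [zpow_negSucc]; exact qc_inv_left hc (qc_pow_left hc h (m + 1))

lemma qc_pow_right {x y : G} (h : qc c x y) (m : ℕ) : qc c x (y ^ m) := by
  induction m with
  | zero => simpa using qc_one_right hc
  | succ m ih => rw [pow_succ]; exact qc_mul_right hc ih h

lemma qc_zpow_right {x y : G} (h : qc c x y) (m : ℤ) : qc c x (y ^ m) := by
  cases m with
  | ofNat m => simpa using qc_pow_right hc h m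
  | negSucc m => rw [zpow_negSucc]; exact qc_inv_right hc (qc_pow_right hc h (m + 1))

lemma qc_list_prod_right {ι : Type*} {x : G} (L : List ι) (f : ι → G)
    (h : ∀ i ∈ L, qc c x (f i)) : qc c x (L.map f).prod := by
  induction L with
  | nil => simpa using qc_one_right hc
  | cons a L ih =>
    rw [List.map_cons, List.prod_cons]
    exact qc_mul_right hc (h a (List.mem_cons_self)) (ih fun i hi => h i (List.mem_cons_of_mem a hi))

lemma qc_merge {n : ℕ} (t : Fin n → G) (ht : ∀ i j, i ≠ j → qc c (t i) (t j)) (α β : Fin n → ℤ) :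
    ∃ γ : Γ, ((List.finRange n).map fun i => t i ^ α i).prod *
        ((List.finRange n).map fun i => t i ^ β i).prod
      = c γ * ((List.finRange n).map fun i => t i ^ (α i + β i)).prod := by
  induction n with
  | zero => exact ⟨1, by simp⟩
  | succ n ih =>
    obtain ⟨γ₁, h₁⟩ := ih (fun i => t i.succ)
      (fun i j hij => ht _ _ (fun e => hij (Fin.succ_injective n e)))
      (fun i => α i.succ) (fun i => β i.succ)
    have hq : qc c (t 0 ^ β 0) (((List.finRange n).map fun i => t i.succ ^ α i.succ).prod) :=
      qc_list_prod_right hc _ _ fun i _ =>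
        qc_zpow_right hc (qc_zpow_left hc (ht _ _ (Fin.succ_ne_zero i).symm) _) _
    obtain ⟨γ₂, h₂⟩ := hq
    refine ⟨γ₂ * γ₁, ?_⟩
    rw [List.finRange_succ]
    simp only [List.map_cons, List.prod_cons, List.map_map]
    have e1 : ((List.finRange n).map ((fun i => t i ^ α i) ∘ Fin.succ)).prod
        = ((List.finRange n).map fun i => t i.succ ^ α i.succ).prod := rfl
    have e2 : ((List.finRange n).map ((fun i => t i ^ β i) ∘ Fin.succ)).prod
        = ((List.finRange n).map fun i => t i.succ ^ β i.succ).prod := rfl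
    have e3 : ((List.finRange n).map ((fun i => t i ^ (α i + β i)) ∘ Fin.succ)).prod
        = ((List.finRange n).map fun i => t i.succ ^ (α i.succ + β i.succ)).prod := rfl
    rw [e1, e2, e3]
    set Pα := ((List.finRange n).map fun i => t i.succ ^ α i.succ).prod
    set Pβ := ((List.finRange n).map fun i => t i.succ ^ β i.succ).prod
    calc t 0 ^ α 0 * Pα * (t 0 ^ β 0 * Pβ)
        = t 0 ^ α 0 * (Pα * t 0 ^ β 0) * Pβ := by group
      _ = t 0 ^ α 0 * (c γ₂ * (t 0 ^ β 0 * Pα)) * Pβ := by rw [h₂]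
      _ = c γ₂ * (t 0 ^ α 0 * t 0 ^ β 0 * (Pα * Pβ)) := by rw [hcomm_of hc]; group
      _ = c γ₂ * (t 0 ^ (α 0 + β 0) * (c γ₁ * ((List.finRange n).map fun i => t i.succ ^ (α i.succ + β i.succ)).prod)) := by
          rw [h₁, zpow_add]
      _ = c (γ₂ * γ₁) * (t 0 ^ (α 0 + β 0) * ((List.finRange n).map fun i => t i.succ ^ (α i.succ + β i.succ)).prod) := by
          rw [map_mul, hcomm_of hc γ₁]; group

end QC
section SL
variable {k R A : Type*} [Field k] [Ring R] [Algebra k R] [Ring A] [Algebra k A]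
variable {n : ℕ} {σ : Fin n → R ≃ₐ[k] R} {p : Fin n → Fin n → kˣ}

/-- The image of `kˣ` in `Aˣ`. -/
noncomputable def η (k A : Type*) [Field k] [Ring A] [Algebra k A] : kˣ →* Aˣ :=
  Units.map (algebraMap k A).toMonoidHom

lemma η_val (γ : kˣ) : ((η k A γ : Aˣ) : A) = algebraMap k A γ := rfl

lemma η_central : ∀ (γ : kˣ) (g : Aˣ), η k A γ * g = g * η k A γ := fun γ g =>
  Units.ext (by simp only [Units.val_mul, η_val]; exact Algebra.commutes _ _)

lemma σpow_zero (σ : Fin n → R ≃ₐ[k] R) : σpow σ 0 = 1 :=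
  List.prod_eq_one (by simp)

lemma tpow_zero (t : Fin n → Aˣ) : tpow t 0 = 1 :=
  List.prod_eq_one (by simp)

lemma σpow_comm_apply (hσ : ∀ i j, σ i * σ j = σ j * σ i) (α β : Fin n → ℤ) (r : R) :
    σpow σ α (σpow σ β r) = σpow σ (α + β) r := by
  have hc : ∀ (γ : kˣ) (g : R ≃ₐ[k] R), (1 : kˣ →* (R ≃ₐ[k] R)) γ * g = g * (1 : kˣ →* (R ≃ₐ[k] R)) γ := by
    intro γ g; simp
  obtain ⟨γ, hγ⟩ := qc_merge (c := (1 : kˣ →* (R ≃ₐ[k] R))) hc σ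
    (fun i j _ => ⟨1, by simp [show σ j * σ i = σ i * σ j from (hσ i j).symm]⟩) α β
  have : σpow σ α * σpow σ β = σpow σ (α + β) := by
    simpa [tpow, σpow] using hγ
  rw [← this, AlgEquiv.mul_apply]

end SL

section CC
variable {k R A : Type*} [Field k] [Ring R] [Algebra k R] [Ring A] [Algebra k A]
variable {n : ℕ} {σ : Fin n → R ≃ₐ[k] R} {p : Fin n → Fin n → kˣ}
variable (E : SkewLaurent k σ p A)

/-- `u` intertwines `ι` via `τ`. -/
def cc (u : Aˣ) (τ : R ≃ₐ[k] R) : Prop := ∀ r : R, (u : A) * E.ι r = E.ι (τ r) * u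

lemma cc_one : cc E 1 1 := fun r => by simp

lemma cc_mul {u v : Aˣ} {τ ρ : R ≃ₐ[k] R} (hu : cc E u τ) (hv : cc E v ρ) :
    cc E (u * v) (τ * ρ) := fun r => by
  rw [Units.val_mul, AlgEquiv.mul_apply, mul_assoc, hv r, ← mul_assoc, hu (ρ r), mul_assoc]

lemma cc_inv {u : Aˣ} {τ : R ≃ₐ[k] R} (hu : cc E u τ) : cc E u⁻¹ τ⁻¹ := fun r => by
  have key : E.ι r * ↑u = ↑u * E.ι (τ⁻¹ r) := by
    have := hu (τ.symm r)
    rw [AlgEquiv.apply_symm_apply] at this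
    exact this.symm
  calc (↑u⁻¹ : A) * E.ι r
      = ↑u⁻¹ * (E.ι r * ↑u) * ↑u⁻¹ := by rw [mul_assoc, mul_assoc, Units.mul_inv, mul_one]
    _ = ↑u⁻¹ * (↑u * E.ι (τ⁻¹ r)) * ↑u⁻¹ := by rw [key]
    _ = E.ι (τ⁻¹ r) * ↑u⁻¹ := by rw [← mul_assoc, Units.inv_mul, one_mul]

lemma cc_pow {u : Aˣ} {τ : R ≃ₐ[k] R} (hu : cc E u τ) (m : ℕ) : cc E (u ^ m) (τ ^ m) := by
  induction m with
  | zero => simpa using cc_one E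
  | succ m ih => rw [pow_succ, pow_succ]; exact cc_mul E ih hu

lemma cc_zpow {u : Aˣ} {τ : R ≃ₐ[k] R} (hu : cc E u τ) (m : ℤ) : cc E (u ^ m) (τ ^ m) := by
  cases m with
  | ofNat m => rw [Int.ofNat_eq_coe, zpow_natCast, zpow_natCast]; exact cc_pow E hu m
  | negSucc m => rw [zpow_negSucc, zpow_negSucc]; exact cc_inv E (cc_pow E hu (m + 1))

lemma cc_list_prod (α : Fin n → ℤ) (L : List (Fin n)) :
    cc E ((L.map fun i => E.t i ^ α i).prod) ((L.map fun i => σ i ^ α i).prod) := by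
  induction L with
  | nil => simpa using cc_one E
  | cons a L ih =>
    rw [List.map_cons, List.prod_cons, List.map_cons, List.prod_cons]
    exact cc_mul E (cc_zpow E (fun r => E.rel_r a r) (α a)) ih

lemma tpow_mul_ι (α : Fin n → ℤ) (r : R) :
    ((tpow E.t α : Aˣ) : A) * E.ι r = E.ι (σpow σ α r) * ((tpow E.t α : Aˣ) : A) :=
  cc_list_prod E α (List.finRange n) r

lemma qc_t (i j : Fin n) (hij : i ≠ j) : qc (η k A) (E.t i) (E.t j) := by
  refine ⟨p i j, Units.ext ?_⟩
  simp only [Units.val_mul, η_val]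
  exact E.rel_t i j hij

lemma tpow_mul_tpow (α β : Fin n → ℤ) :
    ∃ γ : kˣ, ((tpow E.t α : Aˣ) : A) * ((tpow E.t β : Aˣ) : A)
      = algebraMap k A γ * ((tpow E.t (α + β) : Aˣ) : A) := by
  obtain ⟨γ, hγ⟩ := qc_merge (c := η k A) η_central E.t (fun i j hij => qc_t E i j hij) α β
  refine ⟨γ, ?_⟩
  have : tpow E.t α * tpow E.t β = η k A γ * tpow E.t (α + β) := by
    simpa [tpow] using hγ
  calc ((tpow E.t α : Aˣ) : A) * ((tpow E.t β : Aˣ) : A)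
      = ((tpow E.t α * tpow E.t β : Aˣ) : A) := by rw [Units.val_mul]
    _ = ((η k A γ * tpow E.t (α + β) : Aˣ) : A) := by rw [this]
    _ = algebraMap k A γ * ((tpow E.t (α + β) : Aˣ) : A) := by rw [Units.val_mul, η_val]

lemma ι_injective : Function.Injective E.ι := by
  intro r s hrs
  have h : E.ι (r - s) = 0 := by rw [map_sub, hrs, sub_self]
  have h2 : (Finsupp.single (0 : Fin n → ℤ) (r - s)).sum
      (fun α r => E.ι r * ((tpow E.t α : Aˣ) : A)) = 0 := by
    rw [Finsupp.sum_single_index (by simp)]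
    rw [h, zero_mul]
  have := E.repr_free _ h2
  exact sub_eq_zero.mp (Finsupp.single_eq_zero.mp this)

end CC

section Ideals
variable {k R : Type*} [Field k] [CommRing R] [Algebra k R]

/-- A `k`-subspace of `R` absorbing multiplication by `R`. -/
def idl (M : Submodule k R) : Prop := ∀ (r x : R), x ∈ M → r * x ∈ M

lemma idl_top : idl (⊤ : Submodule k R) := fun _ _ _ => trivial

lemma idl_mul_left {M N : Submodule k R} (hM : idl M) : idl (M * N) := by
  intro r x hx
  refine Submodule.mul_induction_on hx (fun m hm n hn => ?_) (fun a b ha hb => ?_)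
  · rw [← mul_assoc]; exact Submodule.mul_mem_mul (hM r m hm) hn
  · rw [mul_add]; exact add_mem ha hb

lemma idl_map (e : R ≃ₐ[k] R) {M : Submodule k R} (hM : idl M) :
    idl (M.map e.toLinearMap) := by
  rintro r x ⟨y, hy, rfl⟩
  exact ⟨e.symm r * y, hM _ _ hy, by simp⟩

lemma idl_prod {L : List (Submodule k R)} (h : L ≠ []) (hL : ∀ M ∈ L, idl M) :
    idl L.prod := by
  cases L with
  | nil => exact absurd rfl h
  | cons M L => rw [List.prod_cons]; exact idl_mul_left (hL M (List.mem_cons_self))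

lemma seg_zero (σ0 : R ≃ₐ[k] R) (H J : Submodule k R) : seg σ0 H J 0 = ⊤ := by
  simp [seg]

lemma coe_range_list (m : ℕ) :
    ((do let a ← List.range m; pure ((a : ℤ))) : List ℤ)
      = (List.range m).map (fun a : ℕ => (a : ℤ)) := by
  change List.flatMap (fun a : ℕ => [(a:ℤ)]) (List.range m) = _
  induction (List.range m) with
  | nil => rfl
  | cons x l ih => simp [List.flatMap_cons, ih]

lemma seg_of_pos (σ0 : R ≃ₐ[k] R) (H J : Submodule k R) {m : ℤ} (h : 0 < m) :
    seg σ0 H J m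
      = ((List.range m.toNat).map fun i : ℕ =>
          J.map ((σ0 ^ ((i : ℕ) : ℤ)).toLinearMap)).prod := by
  rw [seg, if_pos h, coe_range_list, List.map_map]
  rfl

lemma seg_of_neg (σ0 : R ≃ₐ[k] R) (H J : Submodule k R) {m : ℤ} (h : m < 0) :
    seg σ0 H J m
      = ((List.range (-m).toNat).map fun i : ℕ =>
          H.map ((σ0 ^ (-(((i : ℕ) : ℤ) + 1))).toLinearMap)).prod := by
  rw [seg, if_neg (not_lt.mpr h.le), if_neg h.ne, coe_range_list, List.map_map]
  rfl

lemma idl_seg (σ0 : R ≃ₐ[k] R) {H J : Submodule k R} (hH : idl H) (hJ : idl J) (m : ℤ) :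
    idl (seg σ0 H J m) := by
  rcases lt_trichotomy 0 m with h | h | h
  · rw [seg_of_pos σ0 H J h]
    refine idl_prod ?_ ?_
    · intro hnil
      have := congrArg List.length hnil
      simp only [List.length_map, List.length_range, List.length_nil] at this
      omega
    · intro M hM
      obtain ⟨i, _, rfl⟩ := List.mem_map.mp hM
      exact idl_map _ hJ
  · rw [← h, seg_zero]; exact idl_top
  · rw [seg_of_neg σ0 H J h]
    refine idl_prod ?_ ?_
    · intro hnil
      have := congrArg List.length hnil
      simp only [List.length_map, List.length_range, List.length_nil] at this
      omega
    · intro M hM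
      obtain ⟨i, _, rfl⟩ := List.mem_map.mp hM
      exact idl_map _ hH

lemma idl_segVec {n : ℕ} (hn : 0 < n) {σ : Fin n → R ≃ₐ[k] R} {H J : Fin n → Submodule k R}
    (hH : ∀ i, idl (H i)) (hJ : ∀ i, idl (J i)) (α : Fin n → ℤ) :
    idl (segVec σ H J α) := by
  refine idl_prod ?_ ?_
  · intro hnil
    have := congrArg List.length hnil
    simp only [List.length_map, List.length_finRange, List.length_nil] at this
    omega
  · intro M hM
    obtain ⟨i, _, rfl⟩ := List.mem_map.mp hM
    exact idl_seg _ (hH i) (hJ i) _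

lemma one_ne_bot [Nontrivial R] : (1 : Submodule k R) ≠ ⊥ := by
  rw [Submodule.ne_bot_iff]
  exact ⟨1, Submodule.one_le.mp le_rfl, one_ne_zero⟩

lemma mul_ne_bot [IsDomain R] {M N : Submodule k R} (hM : M ≠ ⊥) (hN : N ≠ ⊥) :
    M * N ≠ ⊥ := by
  rw [Submodule.ne_bot_iff] at *
  obtain ⟨x, hx, hx0⟩ := hM
  obtain ⟨y, hy, hy0⟩ := hN
  exact ⟨x * y, Submodule.mul_mem_mul hx hy, mul_ne_zero hx0 hy0⟩

lemma prod_ne_bot [IsDomain R] {L : List (Submodule k R)} (h : ∀ M ∈ L, M ≠ ⊥) :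
    L.prod ≠ ⊥ := by
  induction L with
  | nil => simpa using one_ne_bot
  | cons M L ih =>
    rw [List.prod_cons]
    exact mul_ne_bot (h M (List.mem_cons_self))
      (ih fun N hN => h N (List.mem_cons_of_mem M hN))

lemma segVec_ne_bot [IsDomain R] {n : ℕ} {σ : Fin n → R ≃ₐ[k] R}
    {H J : Fin n → Submodule k R}
    (hseg : ∀ i m, seg (σ i) (H i) (J i) m ≠ ⊥) (α : Fin n → ℤ) :
    segVec σ H J α ≠ ⊥ := by
  refine prod_ne_bot fun M hM => ?_
  obtain ⟨i, _, rfl⟩ := List.mem_map.mp hM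
  exact hseg i _

lemma map_map_eq (e f : R ≃ₐ[k] R) (M : Submodule k R) :
    (M.map f.toLinearMap).map e.toLinearMap = M.map (e * f).toLinearMap := by
  rw [← Submodule.map_comp]
  rfl

lemma map_prod_list (e : R ≃ₐ[k] R) (L : List (Submodule k R)) :
    L.prod.map e.toLinearMap = (L.map (Submodule.map e.toLinearMap)).prod := by
  induction L with
  | nil =>
    simpa using Submodule.map_one (e.toAlgHom : R →ₐ[k] R)
  | cons M L ih =>
    rw [List.prod_cons, List.map_cons, List.prod_cons, ← ih]
    exact Submodule.map_mul M L.prod (e.toAlgHom : R →ₐ[k] R)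

lemma map_id_self (M : Submodule k R) : M.map ((1 : R ≃ₐ[k] R)).toLinearMap = M := by
  have : ((1 : R ≃ₐ[k] R)).toLinearMap = LinearMap.id := rfl
  rw [this, Submodule.map_id]

lemma map_pow_fix (e : R ≃ₐ[k] R) {M : Submodule k R} (hM : M.map e.toLinearMap = M)
    (m : ℕ) : M.map ((e ^ m).toLinearMap) = M := by
  induction m with
  | zero => rw [pow_zero]; exact map_id_self M
  | succ m ih => rw [pow_succ, ← map_map_eq, hM, ih]

lemma map_inv_fix (e : R ≃ₐ[k] R) {M : Submodule k R} (hM : M.map e.toLinearMap = M) :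
    M.map ((e⁻¹ : R ≃ₐ[k] R)).toLinearMap = M := by
  conv_lhs => rw [← hM]
  rw [map_map_eq, inv_mul_cancel, map_id_self]

lemma map_zpow_fix (e : R ≃ₐ[k] R) {M : Submodule k R} (hM : M.map e.toLinearMap = M)
    (m : ℤ) : M.map ((e ^ m).toLinearMap) = M := by
  cases m with
  | ofNat m => rw [Int.ofNat_eq_coe, zpow_natCast]; exact map_pow_fix e hM m
  | negSucc m => rw [zpow_negSucc]; exact map_inv_fix _ (map_pow_fix e hM (m + 1))

lemma map_seg_fix {σ0 e : R ≃ₐ[k] R} (hc : Commute e σ0) {H J : Submodule k R}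
    (hH : H.map e.toLinearMap = H) (hJ : J.map e.toLinearMap = J) (m : ℤ) :
    (seg σ0 H J m).map e.toLinearMap = seg σ0 H J m := by
  rcases lt_trichotomy 0 m with h | h | h
  · rw [seg_of_pos σ0 H J h, map_prod_list, List.map_map]
    congr 1
    refine List.map_congr_left fun i _ => ?_
    show (J.map ((σ0 ^ ((i:ℕ) : ℤ)).toLinearMap)).map e.toLinearMap
        = J.map ((σ0 ^ ((i:ℕ) : ℤ)).toLinearMap)
    rw [map_map_eq, (hc.zpow_right ((i:ℕ) : ℤ)).eq, ← map_map_eq, hJ]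
  · rw [← h, seg_zero]
    refine le_antisymm le_top fun x _ => ⟨e.symm x, trivial, by simp⟩
  · rw [seg_of_neg σ0 H J h, map_prod_list, List.map_map]
    congr 1
    refine List.map_congr_left fun i _ => ?_
    show (H.map ((σ0 ^ (-(((i:ℕ):ℤ) + 1))).toLinearMap)).map e.toLinearMap
        = H.map ((σ0 ^ (-(((i:ℕ):ℤ) + 1))).toLinearMap)
    rw [map_map_eq, (hc.zpow_right (-(((i:ℕ):ℤ) + 1))).eq, ← map_map_eq, hH]

lemma map_listprod_fix {n : ℕ} (f : Fin n → R ≃ₐ[k] R) (N : Submodule k R)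
    (L : List (Fin n)) (hfix : ∀ i ∈ L, N.map (f i).toLinearMap = N) :
    N.map (((L.map f).prod).toLinearMap) = N := by
  induction L with
  | nil => exact map_id_self N
  | cons i L ih =>
    rw [List.map_cons, List.prod_cons, ← map_map_eq,
      ih (fun j hj => hfix j (List.mem_cons_of_mem i hj)), hfix i (List.mem_cons_self)]

lemma map_prod_prod_fix {n : ℕ} (f : Fin n → R ≃ₐ[k] R) (N : Fin n → Submodule k R)
    (hcomm : ∀ i j, Commute (f i) (f j))
    (hfix : ∀ i j, i ≠ j → (N i).map (f j).toLinearMap = N i) :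
    ∀ L : List (Fin n), L.Nodup →
      (((L.map N).prod).map (((L.map f).prod).toLinearMap))
        = (L.map fun i => (N i).map (f i).toLinearMap).prod := by
  intro L
  induction L with
  | nil => intro _; simpa using map_id_self (1 : Submodule k R)
  | cons j L ih =>
    intro hnd
    have hjL : j ∉ L := (List.nodup_cons.mp hnd).1
    have hndL : L.Nodup := (List.nodup_cons.mp hnd).2
    simp only [List.map_cons, List.prod_cons]
    rw [← map_map_eq]
    have hdist : ((N j * (L.map N).prod).map (((L.map f).prod).toLinearMap))
        = (N j).map (((L.map f).prod).toLinearMap)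
          * ((L.map N).prod).map (((L.map f).prod).toLinearMap) := by
      -- map of product of submodules distributes; σpow-like prod is an AlgEquiv
      exact Submodule.map_mul _ _ (((L.map f).prod).toAlgHom : R →ₐ[k] R)
    rw [hdist]
    rw [map_listprod_fix f (N j) L (fun i hi => hfix j i (fun e => hjL (e ▸ hi)))]
    rw [ih hndL]
    refine Eq.trans (Submodule.map_mul _ _ ((f j).toAlgHom : R →ₐ[k] R)) ?_
    congr 1
    show ((L.map fun i => (N i).map (f i).toLinearMap).prod).map (f j).toLinearMap
        = (L.map fun i => (N i).map (f i).toLinearMap).prod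
    rw [map_prod_list, List.map_map]
    refine congrArg List.prod (List.map_congr_left fun i hi => ?_)
    show ((N i).map ((f i).toLinearMap)).map ((f j).toLinearMap)
        = (N i).map ((f i).toLinearMap)
    have hij : i ≠ j := fun e => hjL (e ▸ hi)
    rw [map_map_eq, (hcomm j i).eq, ← map_map_eq, hfix i j hij]

end Ideals

section SegMul
variable {k R : Type*} [Field k] [CommRing R] [Algebra k R]

lemma list_prod_le_prod {ι : Type*} (L : List ι) (f g : ι → Submodule k R)
    (h : ∀ i ∈ L, f i ≤ g i) : (L.map f).prod ≤ (L.map g).prod := by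
  induction L with
  | nil => simp
  | cons a L ih =>
    rw [List.map_cons, List.prod_cons, List.map_cons, List.prod_cons]
    exact mul_le_mul' (h a (List.mem_cons_self))
      (ih fun i hi => h i (List.mem_cons_of_mem a hi))

lemma map_top_self (e : R ≃ₐ[k] R) :
    (⊤ : Submodule k R).map e.toLinearMap = ⊤ :=
  le_antisymm le_top fun x _ => ⟨e.symm x, trivial, by simp⟩

lemma seg_mul_seg (σ0 : R ≃ₐ[k] R) {H J : Submodule k R} (hH : idl H) (hJ : idl J)
    {a b : ℤ} (ha : 0 ≤ a) (hb : 0 ≤ b) :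
    seg σ0 H J a * (seg σ0 H J b).map ((σ0 ^ a).toLinearMap) ≤ seg σ0 H J (a + b) := by
  rcases ha.lt_or_eq with ha' | ha'
  · rcases hb.lt_or_eq with hb' | hb'
    · have hab : 0 < a + b := by omega
      refine le_of_eq ?_
      rw [seg_of_pos σ0 H J ha', seg_of_pos σ0 H J hb', seg_of_pos σ0 H J hab]
      rw [map_prod_list, List.map_map]
      rw [show (a + b).toNat = a.toNat + b.toNat from Int.toNat_add ha hb, List.range_add,
        List.map_append, List.prod_append, List.map_map]
      congr 1
      refine congrArg List.prod (List.map_congr_left fun i _ => ?_)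
      show (J.map ((σ0 ^ ((i : ℕ) : ℤ)).toLinearMap)).map ((σ0 ^ a).toLinearMap)
          = J.map ((σ0 ^ (((a.toNat + i : ℕ)) : ℤ)).toLinearMap)
      have he : a + (i : ℤ) = (((a.toNat + i : ℕ)) : ℤ) := by omega
      rw [map_map_eq, ← zpow_add, he]
    · rw [← hb', seg_zero, add_zero, map_top_self]
      refine Submodule.mul_le.mpr fun m hm x _ => ?_
      rw [mul_comm]
      exact idl_seg σ0 hH hJ a x m hm
  · rw [← ha', seg_zero, zero_add, zpow_zero, map_id_self]
    exact Submodule.mul_le.mpr fun m _ x hx => idl_seg σ0 hH hJ b m x hx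

variable {n : ℕ} {σ : Fin n → R ≃ₐ[k] R} {H J : Fin n → Submodule k R}

lemma map_σpow_segVec (hσ : ∀ i j, σ i * σ j = σ j * σ i)
    (hmapH : ∀ i j, i ≠ j → (H j).map (σ i).toLinearMap = H j)
    (hmapJ : ∀ i j, i ≠ j → (J j).map (σ i).toLinearMap = J j)
    (α β : Fin n → ℤ) :
    (segVec σ H J β).map (σpow σ α).toLinearMap
      = ((List.finRange n).map fun i =>
          (seg (σ i) (H i) (J i) (β i)).map ((σ i ^ α i).toLinearMap)).prod := by
  have hcomm : ∀ i j : Fin n, Commute (σ i ^ α i) (σ j ^ α j) := by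
    intro i j
    rcases eq_or_ne i j with rfl | hij
    · exact Commute.refl _
    · exact (Commute.zpow_zpow (hσ i j) _ _)
  have hfix : ∀ i j : Fin n, i ≠ j →
      (seg (σ i) (H i) (J i) (β i)).map ((σ j ^ α j).toLinearMap)
        = seg (σ i) (H i) (J i) (β i) := by
    intro i j hij
    exact map_seg_fix ((Commute.zpow_left (hσ j i) _))
      (map_zpow_fix (σ j) (hmapH j i (fun e => hij e.symm)) (α j))
      (map_zpow_fix (σ j) (hmapJ j i (fun e => hij e.symm)) (α j)) (β i)
  exact map_prod_prod_fix (fun i => σ i ^ α i) (fun i => seg (σ i) (H i) (J i) (β i))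
    hcomm hfix (List.finRange n) (List.nodup_finRange n)

lemma segVec_mul_le (hσ : ∀ i j, σ i * σ j = σ j * σ i)
    (hmapH : ∀ i j, i ≠ j → (H j).map (σ i).toLinearMap = H j)
    (hmapJ : ∀ i j, i ≠ j → (J j).map (σ i).toLinearMap = J j)
    (hidlH : ∀ i, idl (H i)) (hidlJ : ∀ i, idl (J i))
    {α β : Fin n → ℤ} (hα : ∀ i, 0 ≤ α i) (hβ : ∀ i, 0 ≤ β i) :
    segVec σ H J α * (segVec σ H J β).map (σpow σ α).toLinearMap
      ≤ segVec σ H J (α + β) := by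
  rw [map_σpow_segVec hσ hmapH hmapJ α β]
  show ((List.finRange n).map fun i => seg (σ i) (H i) (J i) (α i)).prod * _ ≤
    ((List.finRange n).map fun i => seg (σ i) (H i) (J i) ((α + β) i)).prod
  rw [← List.prod_map_mul]
  exact list_prod_le_prod _ _ _ fun i _ =>
    seg_mul_seg (σ i) (hidlH i) (hidlJ i) (hα i) (hβ i)

lemma mul_σpow_mem_segVec (hσ : ∀ i j, σ i * σ j = σ j * σ i)
    (hmapH : ∀ i j, i ≠ j → (H j).map (σ i).toLinearMap = H j)
    (hmapJ : ∀ i j, i ≠ j → (J j).map (σ i).toLinearMap = J j)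
    (hidlH : ∀ i, idl (H i)) (hidlJ : ∀ i, idl (J i))
    {α β : Fin n → ℤ} (hα : ∀ i, 0 ≤ α i) (hβ : ∀ i, 0 ≤ β i)
    {a b : R} (ha : a ∈ segVec σ H J α) (hb : b ∈ segVec σ H J β) :
    a * σpow σ α b ∈ segVec σ H J (α + β) :=
  segVec_mul_le hσ hmapH hmapJ hidlH hidlJ hα hβ
    (Submodule.mul_mem_mul ha ⟨b, hb, rfl⟩)

end SegMul

section BRmem
variable {k R A : Type*} [Field k] [CommRing R] [Algebra k R] [Ring A] [Algebra k A]
variable {n : ℕ} {σ : Fin n → R ≃ₐ[k] R} {p : Fin n → Fin n → kˣ}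
variable (E : SkewLaurent k σ p A) {H J : Fin n → Submodule k R}

lemma mem_brComponent {α : Fin n → ℤ} {r : R} (hr : r ∈ segVec σ H J α) :
    E.ι r * ((tpow E.t α : Aˣ) : A) ∈ brComponent E H J α := by
  have := Submodule.mem_map_of_mem
    (f := LinearMap.mulRight k ((tpow E.t α : Aˣ) : A))
    (Submodule.mem_map_of_mem (f := E.ι.toLinearMap) hr)
  simpa [brComponent] using this

lemma brComponent_elim {α : Fin n → ℤ} {x : A} (hx : x ∈ brComponent E H J α) :
    ∃ r ∈ segVec σ H J α, x = E.ι r * ((tpow E.t α : Aˣ) : A) := by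
  simp only [brComponent, Submodule.mem_map] at hx
  obtain ⟨y, ⟨r, hr, rfl⟩, rfl⟩ := hx
  exact ⟨r, hr, by simp⟩

lemma mem_brSubmodule {α : Fin n → ℤ} {r : R} (hr : r ∈ segVec σ H J α) :
    E.ι r * ((tpow E.t α : Aˣ) : A) ∈ brSubmodule E H J :=
  (le_iSup (brComponent E H J) α) (mem_brComponent E hr)

end BRmem

section Forms
variable {k R A : Type*} [Field k] [CommRing R] [Algebra k R] [Ring A] [Algebra k A]
variable {n : ℕ} {σ : Fin n → R ≃ₐ[k] R} {p : Fin n → Fin n → kˣ}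
variable (E : SkewLaurent k σ p A)

lemma mul_form (u v : R) (δ ε : Fin n → ℤ) :
    (E.ι u * ((tpow E.t δ : Aˣ) : A)) * (E.ι v * ((tpow E.t ε : Aˣ) : A))
      = E.ι (u * σpow σ δ v) * (((tpow E.t δ : Aˣ) : A) * ((tpow E.t ε : Aˣ) : A)) := by
  calc (E.ι u * ((tpow E.t δ : Aˣ) : A)) * (E.ι v * ((tpow E.t ε : Aˣ) : A))
      = E.ι u * ((((tpow E.t δ : Aˣ) : A) * E.ι v) * ((tpow E.t ε : Aˣ) : A)) := by
        simp only [mul_assoc]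
    _ = E.ι u * ((E.ι (σpow σ δ v) * ((tpow E.t δ : Aˣ) : A)) * ((tpow E.t ε : Aˣ) : A)) := by
        rw [tpow_mul_ι]
    _ = E.ι (u * σpow σ δ v) * (((tpow E.t δ : Aˣ) : A) * ((tpow E.t ε : Aˣ) : A)) := by
        rw [map_mul]; simp only [mul_assoc]

lemma ι_smul_form (z : R) (T : A) (γ : kˣ) :
    E.ι ((γ : k) • z) * T = E.ι z * (algebraMap k A ↑γ * T) := by
  rw [map_smul, Algebra.smul_def, Algebra.commutes, mul_assoc]

lemma scalar_id (z w : A) (γ1 γ2 : kˣ) :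
    z * (algebraMap k A ↑γ1 * w)
      = ((γ1 * γ2⁻¹ : kˣ) : k) • (z * (algebraMap k A ↑γ2 * w)) := by
  have hu : (γ1 : k) = ((γ1 * γ2⁻¹ : kˣ) : k) * (γ2 : k) := by
    rw [← Units.val_mul]; congr 1; group
  calc z * (algebraMap k A ↑γ1 * w)
      = z * (algebraMap k A (((γ1 * γ2⁻¹ : kˣ) : k) * (γ2 : k)) * w) := by rw [← hu]
    _ = z * (algebraMap k A ((γ1 * γ2⁻¹ : kˣ) : k) * (algebraMap k A ↑γ2 * w)) := by
        rw [map_mul, mul_assoc]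
    _ = algebraMap k A ((γ1 * γ2⁻¹ : kˣ) : k) * (z * (algebraMap k A ↑γ2 * w)) := by
        rw [← mul_assoc, ← Algebra.commutes, mul_assoc]
    _ = ((γ1 * γ2⁻¹ : kˣ) : k) • (z * (algebraMap k A ↑γ2 * w)) :=
        (Algebra.smul_def _ _).symm

end Forms

/-- Let `R` be a commutative noetherian domain and
`B = R_p(t, σ, H, J)` a BR algebra of rank `n`.  The multiplicative set
`X = ({a t^α ∣ a ∈ I^{(α)}, α > 0} ∪ {1}) \ {0}` is both a left and a right Ore
set of `B`. -/
theorem brAlgebra_oreSet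
    {k R A : Type*} [Field k] [CommRing R] [IsDomain R] [IsNoetherianRing R]
    [Algebra k R] [Ring A] [Algebra k A]
    {n : ℕ} {σ : Fin n → R ≃ₐ[k] R} {p : Fin n → Fin n → kˣ}
    {H J : Fin n → Submodule k R} (hD : IsBRDatum σ p H J)
    (E : SkewLaurent k σ p A) (B : Subalgebra k A)
    (hB : Subalgebra.toSubmodule B = brSubmodule E H J) :
    -- `X` is a multiplicative set
    ((1 : ↥B) ∈ oreSet E H J B) ∧
    (∀ x ∈ oreSet E H J B, ∀ y ∈ oreSet E H J B, x * y ∈ oreSet E H J B) ∧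
    -- right Ore condition: `x B ∩ g X ≠ ∅`
    (∀ x ∈ oreSet E H J B, ∀ g : ↥B, ∃ (b : ↥B) (y : ↥B),
      y ∈ oreSet E H J B ∧ g * y = x * b) ∧
    -- left Ore condition: `B x ∩ X g ≠ ∅`
    (∀ x ∈ oreSet E H J B, ∀ g : ↥B, ∃ (b : ↥B) (y : ↥B),
      y ∈ oreSet E H J B ∧ y * g = b * x) := by
  classical
  have hιinj : Function.Injective E.ι := ι_injective E
  have hntA : (1 : A) ≠ 0 := by
    intro h
    have h2 : E.ι 1 = E.ι 0 := by rw [map_one, map_zero, h]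
    exact one_ne_zero (hιinj h2)
  have hidlH : ∀ i, idl (H i) := fun i r x hx => hD.H_mul_left i r x hx
  have hidlJ : ∀ i, idl (J i) := fun i r x hx => hD.J_mul_left i r x hx
  have hone : (1 : ↥B) ∈ oreSet E H J B := by
    refine ⟨fun h => hntA ?_, Or.inl rfl⟩
    calc (1 : A) = ((1 : ↥B) : A) := (OneMemClass.coe_one B).symm
      _ = ((0 : ↥B) : A) := by rw [h]
      _ = 0 := ZeroMemClass.coe_zero B
  have hprodne : ∀ (r : R) (α : Fin n → ℤ), r ≠ 0 →
      E.ι r * ((tpow E.t α : Aˣ) : A) ≠ 0 := by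
    intro r α hr h
    have h1 : E.ι r = 0 := (Units.mul_left_eq_zero _).mp h
    exact hr (hιinj (h1.trans (map_zero E.ι).symm))
  -- multiplicative closure
  have hmul : ∀ x ∈ oreSet E H J B, ∀ y ∈ oreSet E H J B, x * y ∈ oreSet E H J B := by
    rintro x ⟨hx0, hx⟩ y ⟨hy0, hy⟩
    rcases hx with rfl | ⟨α, hα0, hαne, a, ha, hxa⟩
    · rw [one_mul]; exact ⟨hy0, hy⟩
    rcases hy with rfl | ⟨β, hβ0, hβne, b, hb, hyb⟩
    · rw [mul_one]; exact ⟨hx0, Or.inr ⟨α, hα0, hαne, a, ha, hxa⟩⟩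
    obtain ⟨γ, hγ⟩ := tpow_mul_tpow E α β
    have hane : a ≠ 0 := by
      intro h
      apply hx0
      apply Subtype.ext
      rw [hxa, h, map_zero, zero_mul]
      rfl
    have hbne : b ≠ 0 := by
      intro h
      apply hy0
      apply Subtype.ext
      rw [hyb, h, map_zero, zero_mul]
      rfl
    have hcoe : ((x * y : ↥B) : A)
        = E.ι ((γ : k) • (a * σpow σ α b)) * ((tpow E.t (α + β) : Aˣ) : A) := by
      calc ((x * y : ↥B) : A) = (x : A) * (y : A) := rfl
        _ = (E.ι a * ((tpow E.t α : Aˣ) : A)) * (E.ι b * ((tpow E.t β : Aˣ) : A)) := by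
            rw [hxa, hyb]
        _ = E.ι (a * σpow σ α b) * (((tpow E.t α : Aˣ) : A) * ((tpow E.t β : Aˣ) : A)) :=
            mul_form E a b α β
        _ = E.ι (a * σpow σ α b) * (algebraMap k A ↑γ * ((tpow E.t (α + β) : Aˣ) : A)) := by
            rw [hγ]
        _ = E.ι ((γ : k) • (a * σpow σ α b)) * ((tpow E.t (α + β) : Aˣ) : A) :=
            (ι_smul_form E _ _ γ).symm
    refine ⟨?_, Or.inr ⟨α + β, fun i => add_nonneg (hα0 i) (hβ0 i), ?_,
      (γ : k) • (a * σpow σ α b), ?_, hcoe⟩⟩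
    · intro h
      have h0 : ((x * y : ↥B) : A) = 0 := by rw [h]; rfl
      rw [hcoe] at h0
      refine hprodne _ _ (smul_ne_zero (Units.ne_zero γ) (mul_ne_zero hane ?_)) h0
      intro hb0
      exact hbne ((σpow σ α).injective (by rw [hb0, map_zero]))
    · intro h
      apply hαne
      funext i
      have h1 := congrFun h i
      simp only [Pi.add_apply, Pi.zero_apply] at h1
      have h2 := hα0 i
      have h3 := hβ0 i
      show α i = 0
      omega
    · exact Submodule.smul_mem _ _
        (mul_σpow_mem_segVec hD.comm hD.mapH hD.mapJ hidlH hidlJ hα0 hβ0 ha hb)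
  -- right Ore
  have hore_r : ∀ x ∈ oreSet E H J B, ∀ g : ↥B, ∃ (b : ↥B) (y : ↥B),
      y ∈ oreSet E H J B ∧ g * y = x * b := by
    rintro x ⟨hx0, hx⟩ g
    rcases hx with rfl | ⟨α, hα0, hαne, a, ha, hxa⟩
    · exact ⟨g, 1, hone, by rw [mul_one, one_mul]⟩
    have hn : 0 < n := by
      rcases Nat.eq_zero_or_pos n with rfl | h
      · exact absurd (Subsingleton.elim α 0) hαne
      · exact h
    have hidlV : ∀ δ : Fin n → ℤ, idl (segVec σ H J δ) :=
      fun δ => idl_segVec hn hidlH hidlJ δ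
    have hane : a ≠ 0 := by
      intro h
      apply hx0
      apply Subtype.ext
      rw [hxa, h, map_zero, zero_mul]
      rfl
    have hg : (g : A) ∈ brSubmodule E H J := by
      rw [← hB] at *
      exact g.2
    rw [brSubmodule, Submodule.mem_iSup_iff_exists_finsupp] at hg
    obtain ⟨f, hfmem, hfsum⟩ := hg
    have hbb : ∀ β : Fin n → ℤ, ∃ r, r ∈ segVec σ H J β ∧
        f β = E.ι r * ((tpow E.t β : Aˣ) : A) := by
      intro β
      obtain ⟨r, hr, hrr⟩ := brComponent_elim E (hfmem β)
      exact ⟨r, hr, hrr⟩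
    choose bb hbbmem hbbeq using hbb
    set s : Finset (Fin n → ℤ) := f.support with hs
    have hSmap : ∀ β : Fin n → ℤ, ∃ z,
        z ∈ (segVec σ H J β).map (σpow σ α).toLinearMap ∧ z ≠ 0 := by
      intro β
      obtain ⟨w, hw, hw0⟩ := (Submodule.ne_bot_iff _).mp (segVec_ne_bot hD.seg_ne_bot β)
      exact ⟨σpow σ α w, Submodule.mem_map_of_mem hw,
        fun h => hw0 ((σpow σ α).injective (by rw [h, map_zero]))⟩
    choose e hemem hene using hSmap
    obtain ⟨c0, hc0mem, hc0ne⟩ := (Submodule.ne_bot_iff _).mp (segVec_ne_bot hD.seg_ne_bot α)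
    set c : R := c0 * ∏ β ∈ s, σpow σ (-β) (a * e β) with hc
    have hcmem : c ∈ segVec σ H J α := by
      rw [hc, mul_comm]
      exact hidlV α _ _ hc0mem
    have hcne : c ≠ 0 := by
      refine mul_ne_zero hc0ne (Finset.prod_ne_zero_iff.mpr fun β _ h => ?_)
      exact (mul_ne_zero hane (hene β)) ((σpow σ (-β)).injective (by rw [h, map_zero]))
    have hkey : ∀ β ∈ s, ∃ r ∈ segVec σ H J β,
        bb β * σpow σ β c = a * σpow σ α r := by
      intro β hβ
      have hsplit : σpow σ β c
          = σpow σ β c0 * ∏ β' ∈ s, σpow σ (β + -β') (a * e β') := by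
        rw [hc, map_mul, map_prod]
        congr 1
        exact Finset.prod_congr rfl fun β' _ => σpow_comm_apply hD.comm β (-β') _
      have hsplit2 : ∏ β' ∈ s, σpow σ (β + -β') (a * e β')
          = (a * e β) * ∏ β' ∈ s.erase β, σpow σ (β + -β') (a * e β') := by
        rw [← Finset.mul_prod_erase s _ hβ]
        congr 1
        have h0 : β + -β = (0 : Fin n → ℤ) := by
          funext i; simp
        rw [h0, σpow_zero]
        rfl
      have hidlmap : idl ((segVec σ H J β).map (σpow σ α).toLinearMap) :=
        idl_map _ (hidlV β)
      have hwmem : (bb β * σpow σ β c0 * ∏ β' ∈ s.erase β, σpow σ (β + -β') (a * e β')) * e β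
          ∈ (segVec σ H J β).map (σpow σ α).toLinearMap :=
        hidlmap _ _ (hemem β)
      obtain ⟨r, hr, hrw⟩ := hwmem
      have hrw' : σpow σ α r
          = (bb β * σpow σ β c0 * ∏ β' ∈ s.erase β, σpow σ (β + -β') (a * e β')) * e β := by
        simpa using hrw
      refine ⟨r, hr, ?_⟩
      rw [hsplit, hsplit2, hrw']
      ring
    choose rr hrrmem hrreq using hkey
    choose γ1 hγ1 using fun β => tpow_mul_tpow E β α
    choose γ2 hγ2 using fun β => tpow_mul_tpow E α β
    set bA : A := ∑ β ∈ s.attach,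
      ((γ1 β.1 * (γ2 β.1)⁻¹ : kˣ) : k) • (E.ι (rr β.1 β.2) * ((tpow E.t β.1 : Aˣ) : A))
      with hbA
    have hbAmem : bA ∈ B := by
      rw [← Subalgebra.mem_toSubmodule, hB]
      refine Submodule.sum_mem _ fun β _ => ?_
      exact Submodule.smul_mem _ _ (mem_brSubmodule E (hrrmem β.1 β.2))
    have hymem : E.ι c * ((tpow E.t α : Aˣ) : A) ∈ B := by
      rw [← Subalgebra.mem_toSubmodule, hB]
      exact mem_brSubmodule E hcmem
    refine ⟨⟨bA, hbAmem⟩, ⟨E.ι c * ((tpow E.t α : Aˣ) : A), hymem⟩,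
      ⟨fun h => hprodne c α hcne (by simpa using congrArg Subtype.val h), Or.inr
        ⟨α, hα0, hαne, c, hcmem, rfl⟩⟩, ?_⟩
    apply Subtype.ext
    show (g : A) * (E.ι c * ((tpow E.t α : Aˣ) : A)) = (x : A) * bA
    have hgsum : (g : A) = ∑ β ∈ s, E.ι (bb β) * ((tpow E.t β : Aˣ) : A) := by
      rw [← hfsum, Finsupp.sum]
      exact Finset.sum_congr rfl fun β _ => hbbeq β
    rw [hgsum, hxa, hbA, Finset.sum_mul, Finset.mul_sum,
      ← Finset.sum_attach s (fun β => (E.ι (bb β) * ((tpow E.t β : Aˣ) : A))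
        * (E.ι c * ((tpow E.t α : Aˣ) : A)))]
    refine Finset.sum_congr rfl fun β _ => ?_
    calc (E.ι (bb β.1) * ((tpow E.t β.1 : Aˣ) : A)) * (E.ι c * ((tpow E.t α : Aˣ) : A))
        = E.ι (bb β.1 * σpow σ β.1 c)
            * (((tpow E.t β.1 : Aˣ) : A) * ((tpow E.t α : Aˣ) : A)) := mul_form E _ _ _ _
      _ = E.ι (a * σpow σ α (rr β.1 β.2))
            * (algebraMap k A ↑(γ1 β.1) * ((tpow E.t (β.1 + α) : Aˣ) : A)) := by
          rw [hrreq β.1 β.2, hγ1 β.1]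
      _ = E.ι (a * σpow σ α (rr β.1 β.2))
            * (algebraMap k A ↑(γ1 β.1) * ((tpow E.t (α + β.1) : Aˣ) : A)) := by
          rw [add_comm β.1 α]
      _ = ((γ1 β.1 * (γ2 β.1)⁻¹ : kˣ) : k) • (E.ι (a * σpow σ α (rr β.1 β.2))
            * (algebraMap k A ↑(γ2 β.1) * ((tpow E.t (α + β.1) : Aˣ) : A))) :=
          scalar_id _ _ _ _
      _ = ((γ1 β.1 * (γ2 β.1)⁻¹ : kˣ) : k) • (E.ι (a * σpow σ α (rr β.1 β.2))
            * (((tpow E.t α : Aˣ) : A) * ((tpow E.t β.1 : Aˣ) : A))) := by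
          rw [hγ2 β.1]
      _ = ((γ1 β.1 * (γ2 β.1)⁻¹ : kˣ) : k) • ((E.ι a * ((tpow E.t α : Aˣ) : A))
            * (E.ι (rr β.1 β.2) * ((tpow E.t β.1 : Aˣ) : A))) := by
          rw [mul_form E a (rr β.1 β.2) α β.1]
      _ = (E.ι a * ((tpow E.t α : Aˣ) : A))
            * (((γ1 β.1 * (γ2 β.1)⁻¹ : kˣ) : k)
              • (E.ι (rr β.1 β.2) * ((tpow E.t β.1 : Aˣ) : A))) := by
          rw [mul_smul_comm]
  -- left Ore
  have hore_l : ∀ x ∈ oreSet E H J B, ∀ g : ↥B, ∃ (b : ↥B) (y : ↥B),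
      y ∈ oreSet E H J B ∧ y * g = b * x := by
    rintro x ⟨hx0, hx⟩ g
    rcases hx with rfl | ⟨α, hα0, hαne, a, ha, hxa⟩
    · exact ⟨g, 1, hone, by rw [mul_one, one_mul]⟩
    have hn : 0 < n := by
      rcases Nat.eq_zero_or_pos n with rfl | h
      · exact absurd (Subsingleton.elim α 0) hαne
      · exact h
    have hidlV : ∀ δ : Fin n → ℤ, idl (segVec σ H J δ) :=
      fun δ => idl_segVec hn hidlH hidlJ δ
    have hane : a ≠ 0 := by
      intro h
      apply hx0
      apply Subtype.ext
      rw [hxa, h, map_zero, zero_mul]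
      rfl
    have hg : (g : A) ∈ brSubmodule E H J := by
      rw [← hB] at *
      exact g.2
    rw [brSubmodule, Submodule.mem_iSup_iff_exists_finsupp] at hg
    obtain ⟨f, hfmem, hfsum⟩ := hg
    have hbb : ∀ β : Fin n → ℤ, ∃ r, r ∈ segVec σ H J β ∧
        f β = E.ι r * ((tpow E.t β : Aˣ) : A) := by
      intro β
      obtain ⟨r, hr, hrr⟩ := brComponent_elim E (hfmem β)
      exact ⟨r, hr, hrr⟩
    choose bb hbbmem hbbeq using hbb
    set s : Finset (Fin n → ℤ) := f.support with hs
    have hS : ∀ β : Fin n → ℤ, ∃ z, z ∈ segVec σ H J β ∧ z ≠ 0 := by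
      intro β
      exact (Submodule.ne_bot_iff _).mp (segVec_ne_bot hD.seg_ne_bot β)
    choose e hemem hene using hS
    obtain ⟨c0, hc0mem, hc0ne⟩ := (Submodule.ne_bot_iff _).mp (segVec_ne_bot hD.seg_ne_bot α)
    set c : R := c0 * ∏ β ∈ s, (σpow σ β a * e β) with hc
    have hcmem : c ∈ segVec σ H J α := by
      rw [hc, mul_comm]
      exact hidlV α _ _ hc0mem
    have hcne : c ≠ 0 := by
      refine mul_ne_zero hc0ne (Finset.prod_ne_zero_iff.mpr fun β _ => ?_)
      refine mul_ne_zero (fun h => hane ((σpow σ β).injective (by rw [h, map_zero]))) (hene β)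
    have hkey : ∀ β ∈ s, ∃ r ∈ segVec σ H J β,
        c * σpow σ α (bb β) = r * σpow σ β a := by
      intro β hβ
      have hsplit : ∏ β' ∈ s, (σpow σ β' a * e β')
          = (σpow σ β a * e β) * ∏ β' ∈ s.erase β, (σpow σ β' a * e β') :=
        (Finset.mul_prod_erase s _ hβ).symm
      refine ⟨(c0 * (∏ β' ∈ s.erase β, (σpow σ β' a * e β')) * σpow σ α (bb β)) * e β,
        hidlV β _ _ (hemem β), ?_⟩
      rw [hc, hsplit]
      ring
    choose rr hrrmem hrreq using hkey
    choose γ1 hγ1 using fun β => tpow_mul_tpow E β α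
    choose γ2 hγ2 using fun β => tpow_mul_tpow E α β
    set bA : A := ∑ β ∈ s.attach,
      ((γ2 β.1 * (γ1 β.1)⁻¹ : kˣ) : k) • (E.ι (rr β.1 β.2) * ((tpow E.t β.1 : Aˣ) : A))
      with hbA
    have hbAmem : bA ∈ B := by
      rw [← Subalgebra.mem_toSubmodule, hB]
      refine Submodule.sum_mem _ fun β _ => ?_
      exact Submodule.smul_mem _ _ (mem_brSubmodule E (hrrmem β.1 β.2))
    have hymem : E.ι c * ((tpow E.t α : Aˣ) : A) ∈ B := by
      rw [← Subalgebra.mem_toSubmodule, hB]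
      exact mem_brSubmodule E hcmem
    refine ⟨⟨bA, hbAmem⟩, ⟨E.ι c * ((tpow E.t α : Aˣ) : A), hymem⟩,
      ⟨fun h => hprodne c α hcne (by simpa using congrArg Subtype.val h), Or.inr
        ⟨α, hα0, hαne, c, hcmem, rfl⟩⟩, ?_⟩
    apply Subtype.ext
    show (E.ι c * ((tpow E.t α : Aˣ) : A)) * (g : A) = bA * (x : A)
    have hgsum : (g : A) = ∑ β ∈ s, E.ι (bb β) * ((tpow E.t β : Aˣ) : A) := by
      rw [← hfsum, Finsupp.sum]
      exact Finset.sum_congr rfl fun β _ => hbbeq β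
    rw [hgsum, hxa, hbA, Finset.mul_sum, Finset.sum_mul,
      ← Finset.sum_attach s (fun β => (E.ι c * ((tpow E.t α : Aˣ) : A))
        * (E.ι (bb β) * ((tpow E.t β : Aˣ) : A)))]
    refine Finset.sum_congr rfl fun β _ => ?_
    calc (E.ι c * ((tpow E.t α : Aˣ) : A)) * (E.ι (bb β.1) * ((tpow E.t β.1 : Aˣ) : A))
        = E.ι (c * σpow σ α (bb β.1))
            * (((tpow E.t α : Aˣ) : A) * ((tpow E.t β.1 : Aˣ) : A)) := mul_form E _ _ _ _
      _ = E.ι (rr β.1 β.2 * σpow σ β.1 a)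
            * (algebraMap k A ↑(γ2 β.1) * ((tpow E.t (α + β.1) : Aˣ) : A)) := by
          rw [hrreq β.1 β.2, hγ2 β.1]
      _ = ((γ2 β.1 * (γ1 β.1)⁻¹ : kˣ) : k) • (E.ι (rr β.1 β.2 * σpow σ β.1 a)
            * (algebraMap k A ↑(γ1 β.1) * ((tpow E.t (α + β.1) : Aˣ) : A))) :=
          scalar_id _ _ _ _
      _ = ((γ2 β.1 * (γ1 β.1)⁻¹ : kˣ) : k) • (E.ι (rr β.1 β.2 * σpow σ β.1 a)
            * (algebraMap k A ↑(γ1 β.1) * ((tpow E.t (β.1 + α) : Aˣ) : A))) := by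
          rw [add_comm α β.1]
      _ = ((γ2 β.1 * (γ1 β.1)⁻¹ : kˣ) : k) • (E.ι (rr β.1 β.2 * σpow σ β.1 a)
            * (((tpow E.t β.1 : Aˣ) : A) * ((tpow E.t α : Aˣ) : A))) := by
          rw [hγ1 β.1]
      _ = ((γ2 β.1 * (γ1 β.1)⁻¹ : kˣ) : k) • ((E.ι (rr β.1 β.2) * ((tpow E.t β.1 : Aˣ) : A))
            * (E.ι a * ((tpow E.t α : Aˣ) : A))) := by
          rw [mul_form E (rr β.1 β.2) a β.1 α]
      _ = (((γ2 β.1 * (γ1 β.1)⁻¹ : kˣ) : k)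
              • (E.ι (rr β.1 β.2) * ((tpow E.t β.1 : Aˣ) : A)))
            * (E.ι a * ((tpow E.t α : Aˣ) : A)) := by
          rw [smul_mul_assoc]
  exact ⟨hone, hmul, hore_r, hore_l⟩

end BR
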